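/- arXiv:2105.07492 — 5 statements merged into one kernel-verified Lean document; each statement's English description precedes it below -/
import Mathlib

section
/- Let f = h + conj(g) be a sense-preserving harmonic mapping on 𝔻 with dilatation ω = g'/h', h' nonvanishing, and fix ζ ∈ 𝔻 with conj(ζ) − (1/2)(1 − |ζ|²) P_f(ζ) ≠ 0. Let ĥ = h − conj(ω(ζ)) g. Then (1 − |ζ|²) ĥ'(ζ) / (conj(ζ) − (1/2)(1 − |ζ|²) Pĥ(ζ)) = (1 − |ω(ζ)|²) · (1 − |ζ|²) h'(ζ) / (conj(ζ) − (1/2)(1 − |ζ|²) P_f(ζ)), where Pĥ = ĥ''/ĥ'. That is, Φ^A for the affinely modified mapping f − conj(ω(ζ)f) at ζ equals (1 − |ω(ζ)|²) times Φ^B for f at ζ. -/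
open Metric

/-- Wirtinger derivative `∂_z F = (1/2)(∂_x F - i ∂_y F)`. -/
noncomputable def wZ (F : ℂ → ℂ) (z : ℂ) : ℂ :=
  (fderiv ℝ F z 1 - Complex.I * fderiv ℝ F z Complex.I) / 2

/-- Wirtinger derivative `∂_z̄ F = (1/2)(∂_x F + i ∂_y F)`. -/
noncomputable def wZb (F : ℂ → ℂ) (z : ℂ) : ℂ :=
  (fderiv ℝ F z 1 + Complex.I * fderiv ℝ F z Complex.I) / 2

/-- Pre-Schwarzian derivative `Ph = h''/h'` of a holomorphic function. -/
noncomputable def preSch (h : ℂ → ℂ) (z : ℂ) : ℂ :=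
  deriv (deriv h) z / deriv h z

/-- Schwarzian derivative `Sh = (Ph)' - (1/2)(Ph)^2` of a holomorphic function. -/
noncomputable def schw (h : ℂ → ℂ) (z : ℂ) : ℂ :=
  deriv (preSch h) z - (1 / 2) * (preSch h z) ^ 2

/-- Dilatation `ω = g'/h'` of the harmonic mapping `f = h + conj g`. -/
noncomputable def dil (h g : ℂ → ℂ) (z : ℂ) : ℂ :=
  deriv g z / deriv h z

/-- Harmonic pre-Schwarzian `P_f = Ph - conj(ω) ω' / (1 - |ω|²)`. -/
noncomputable def preSchH (h g : ℂ → ℂ) (z : ℂ) : ℂ :=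
  preSch h z -
    (starRingEnd ℂ) (dil h g z) * deriv (dil h g) z / ((1 - ‖dil h g z‖ ^ 2 : ℝ) : ℂ)

/-- Harmonic Schwarzian `S_f = ∂_z P_f - (1/2) P_f²`. -/
noncomputable def schwH (h g : ℂ → ℂ) (z : ℂ) : ℂ :=
  wZ (preSchH h g) z - (1 / 2) * (preSchH h g z) ^ 2

/-- Denominator `conj ζ - (1/2)(1-|ζ|²) Ph(ζ)` (case A). -/
noncomputable def denA (h : ℂ → ℂ) (ζ : ℂ) : ℂ :=
  (starRingEnd ℂ) ζ - (1 / 2) * ((1 - ‖ζ‖ ^ 2 : ℝ) : ℂ) * preSch h ζ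

/-- Denominator `conj ζ - (1/2)(1-|ζ|²) P_f(ζ)` (case B). -/
noncomputable def denB (h g : ℂ → ℂ) (ζ : ℂ) : ℂ :=
  (starRingEnd ℂ) ζ - (1 / 2) * ((1 - ‖ζ‖ ^ 2 : ℝ) : ℂ) * preSchH h g ζ

/-- `Φ` for case A: `(1-|ζ|²) h'(ζ) / (conj ζ - (1/2)(1-|ζ|²) Ph(ζ))`. -/
noncomputable def phiA (h : ℂ → ℂ) (ζ : ℂ) : ℂ :=
  ((1 - ‖ζ‖ ^ 2 : ℝ) : ℂ) * deriv h ζ / denA h ζ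

/-- `Φ` for case B: `(1-|ζ|²) h'(ζ) / (conj ζ - (1/2)(1-|ζ|²) P_f(ζ))`. -/
noncomputable def phiB (h g : ℂ → ℂ) (ζ : ℂ) : ℂ :=
  ((1 - ‖ζ‖ ^ 2 : ℝ) : ℂ) * deriv h ζ / denB h g ζ

/-- Case A extension value `E_f(ζ) = f(ζ) + Φ(ζ) + conj(ω(ζ)) conj(Φ(ζ))`, `τ = Ph`. -/
noncomputable def extA (h g : ℂ → ℂ) (ζ : ℂ) : ℂ :=
  (h ζ + (starRingEnd ℂ) (g ζ)) + phiA h ζ +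
    (starRingEnd ℂ) (dil h g ζ) * (starRingEnd ℂ) (phiA h ζ)

/-- Case B extension value `E_f(ζ) = f(ζ) + Φ(ζ) + conj(ω(ζ)) conj(Φ(ζ))`, `τ = P_f`. -/
noncomputable def extB (h g : ℂ → ℂ) (ζ : ℂ) : ℂ :=
  (h ζ + (starRingEnd ℂ) (g ζ)) + phiB h g ζ +
    (starRingEnd ℂ) (dil h g ζ) * (starRingEnd ℂ) (phiB h g ζ)

/-- `Φ^A` for the affinely modified mapping `f - conj(ω(ζ) f)` at `ζ` equals
`(1 - |ω(ζ)|²)` times `Φ^B` for `f` at `ζ`. -/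
theorem phiA_of_modified_eq_phiB
    (h g : ℂ → ℂ)
    (hh : DifferentiableOn ℂ h (ball 0 1)) (hg : DifferentiableOn ℂ g (ball 0 1))
    (hsp : ∀ w ∈ ball (0 : ℂ) 1, ‖dil h g w‖ < 1)
    (hh' : ∀ w ∈ ball (0 : ℂ) 1, deriv h w ≠ 0)
    (ζ : ℂ) (hζ : ζ ∈ ball (0 : ℂ) 1)
    (hden : denB h g ζ ≠ 0)
    (hHat : ℂ → ℂ)
    (hhHat : hHat = fun z => h z - (starRingEnd ℂ) (dil h g ζ) * g z) :
    phiA hHat ζ = ((1 - ‖dil h g ζ‖ ^ 2 : ℝ) : ℂ) * phiB h g ζ := by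
  have hopen : IsOpen (ball (0:ℂ) 1) := isOpen_ball
  have hmem : ball (0:ℂ) 1 ∈ nhds ζ := hopen.mem_nhds hζ
  set c : ℂ := (starRingEnd ℂ) (dil h g ζ) with hc
  have hhA : AnalyticOnNhd ℂ h (ball 0 1) := hh.analyticOnNhd hopen
  have hgA : AnalyticOnNhd ℂ g (ball 0 1) := hg.analyticOnNhd hopen
  have hdh : DifferentiableAt ℂ (deriv h) ζ := ((hhA.deriv) ζ hζ).differentiableAt
  have hdg : DifferentiableAt ℂ (deriv g) ζ := ((hgA.deriv) ζ hζ).differentiableAt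
  have haz : deriv h ζ ≠ 0 := hh' ζ hζ
  set a : ℂ := deriv h ζ with ha
  set b : ℂ := deriv g ζ with hb
  set A : ℂ := deriv (deriv h) ζ with hA
  set B : ℂ := deriv (deriv g) ζ with hB
  set k : ℂ := ((1 - ‖dil h g ζ‖ ^ 2 : ℝ) : ℂ) with hk
  have hω : ‖dil h g ζ‖ < 1 := hsp ζ hζ
  have hkR : (1 - ‖dil h g ζ‖ ^ 2 : ℝ) ≠ 0 := by nlinarith [norm_nonneg (dil h g ζ)]
  have hk0 : k ≠ 0 := by rw [hk]; exact_mod_cast Complex.ofReal_ne_zero.mpr hkR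
  have hcb : c * b = (1 - k) * a := by
    have h1 : c * dil h g ζ = ((‖dil h g ζ‖ ^ 2 : ℝ) : ℂ) := by
      rw [hc, Complex.conj_mul']; push_cast; ring
    have h2 : dil h g ζ * a = b := by
      rw [dil, ← ha, ← hb]; field_simp
    have h3 : (1 - k) = ((‖dil h g ζ‖ ^ 2 : ℝ) : ℂ) := by rw [hk]; push_cast; ring
    rw [h3, ← h1, ← h2]; ring
  have hev : ∀ w ∈ ball (0:ℂ) 1, deriv hHat w = deriv h w - c * deriv g w := by
    intro w hw
    have hdw : DifferentiableAt ℂ h w := hh.differentiableAt (hopen.mem_nhds hw)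
    have hgw : DifferentiableAt ℂ g w := hg.differentiableAt (hopen.mem_nhds hw)
    rw [hhHat, deriv_fun_sub hdw (hgw.const_mul c), deriv_const_mul c hgw]
  have hd1 : deriv hHat ζ = a - c * b := hev ζ hζ
  have hd1' : deriv hHat ζ = k * a := by rw [hd1]; linear_combination -hcb
  have hevF : (deriv hHat) =ᶠ[nhds ζ] fun z => deriv h z - c * deriv g z := by
    filter_upwards [hmem] with w hw using hev w hw
  have hd2 : deriv (deriv hHat) ζ = A - c * B := by
    rw [hevF.deriv_eq, deriv_fun_sub hdh (hdg.const_mul c), deriv_const_mul c hdg]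
  have hdil : deriv (dil h g) ζ = (B * a - b * A) / a ^ 2 := by
    have hevd : (dil h g) =ᶠ[nhds ζ] fun z => deriv g z / deriv h z :=
      Filter.Eventually.of_forall fun w => rfl
    rw [hevd.deriv_eq, deriv_fun_div hdg hdh haz]
  have key : ∀ (A B a b c k : ℂ), a ≠ 0 → k ≠ 0 → c * b = (1 - k) * a →
      (A - c * B) / (k * a) = A / a - c * ((B * a - b * A) / a ^ 2) / k := by
    intro A B a b c k ha hk hcb
    field_simp
    linear_combination (-A) * hcb
  have hpre : preSch hHat ζ = preSchH h g ζ := by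
    rw [preSch, preSchH, preSch, hd2, hd1', hdil, ← hc, ← hk, ← ha, ← hA]
    exact key A B a b c k haz hk0 hcb
  rw [phiA, phiB, denA, denB, hpre, hd1', ← ha]
  ring
end

section
/- Let f = h + conj(g) be a sense-preserving harmonic mapping on 𝔻 with dilatation ω = g'/h', h' nonvanishing, and fix ζ ∈ 𝔻 with conj(ζ) − (1/2)(1 − |ζ|²) P_f(ζ) ≠ 0. Let f̂ = f − conj(ω(ζ) f) = ĥ + conj(ĝ), where ĥ = h − conj(ω(ζ)) g and ĝ = g − ω(ζ) h, and denote by E^A_{f̂}(ζ) the case-(A) extension value of f̂ at ζ and by E^B_f(ζ) the case-(B) extension value of f at ζ. Then E^A_{f̂}(ζ) = E^B_f(ζ) − conj(ω(ζ) E^B_f(ζ)). -/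
open Metric

/-- Connection between the two extensions: the case-(A) extension of the affinely
modified mapping `f̂ = f - conj(ω(ζ) f)` at `ζ` equals `E^B_f(ζ) - conj(ω(ζ) E^B_f(ζ))`. -/
theorem extA_of_modified_eq_extB_affine
    (h g : ℂ → ℂ)
    (hh : DifferentiableOn ℂ h (ball 0 1)) (hg : DifferentiableOn ℂ g (ball 0 1))
    (hsp : ∀ w ∈ ball (0 : ℂ) 1, ‖dil h g w‖ < 1)
    (hh' : ∀ w ∈ ball (0 : ℂ) 1, deriv h w ≠ 0)
    (ζ : ℂ) (hζ : ζ ∈ ball (0 : ℂ) 1)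
    (hden : denB h g ζ ≠ 0)
    (hHat gHat : ℂ → ℂ)
    (hhHat : hHat = fun z => h z - (starRingEnd ℂ) (dil h g ζ) * g z)
    (hgHat : gHat = fun z => g z - dil h g ζ * h z) :
    extA hHat gHat ζ = extB h g ζ - (starRingEnd ℂ) (dil h g ζ * extB h g ζ) := by
  -- notation
  set c := dil h g ζ with hc
  have hopen : IsOpen (ball (0:ℂ) 1) := isOpen_ball
  have hnhds : ball (0:ℂ) 1 ∈ nhds ζ := hopen.mem_nhds hζ
  have Ah : AnalyticOnNhd ℂ h (ball 0 1) := hh.analyticOnNhd hopen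
  have Ag : AnalyticOnNhd ℂ g (ball 0 1) := hg.analyticOnNhd hopen
  have Dh' : DifferentiableAt ℂ (deriv h) ζ := ((Ah.deriv ζ hζ).differentiableAt)
  have Dg' : DifferentiableAt ℂ (deriv g) ζ := ((Ag.deriv ζ hζ).differentiableAt)
  have h1 : deriv h ζ ≠ 0 := hh' ζ hζ
  have hcc : (starRingEnd ℂ) c * c = ((‖c‖^2 : ℝ) : ℂ) := by
    rw [Complex.conj_mul']; norm_cast
  have hclt : ‖c‖ < 1 := hsp ζ hζ
  have hone : (1 : ℂ) - (starRingEnd ℂ) c * c ≠ 0 := by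
    rw [Complex.conj_mul']
    intro hE
    have h2 : (1 : ℝ) - ‖c‖^2 = 0 := by exact_mod_cast hE
    nlinarith [norm_nonneg c]
  have hg1 : deriv g ζ = c * deriv h ζ := by
    rw [hc]; unfold dil; field_simp
  -- first derivative of hHat on the ball
  have dhHat : ∀ w ∈ ball (0:ℂ) 1,
      deriv hHat w = deriv h w - (starRingEnd ℂ) c * deriv g w := by
    intro w hw
    rw [hhHat]
    rw [deriv_fun_sub (hh.differentiableAt (hopen.mem_nhds hw))
      ((hg.differentiableAt (hopen.mem_nhds hw)).const_mul _),
      deriv_const_mul _ (hg.differentiableAt (hopen.mem_nhds hw))]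
  have dhHatζ : deriv hHat ζ = deriv h ζ * (1 - (starRingEnd ℂ) c * c) := by
    rw [dhHat ζ hζ, hg1]; ring
  -- second derivative of hHat at ζ
  have d2hHat : deriv (deriv hHat) ζ
      = deriv (deriv h) ζ - (starRingEnd ℂ) c * deriv (deriv g) ζ := by
    have hev : deriv hHat =ᶠ[nhds ζ] fun w => deriv h w - (starRingEnd ℂ) c * deriv g w :=
      Filter.eventuallyEq_of_mem hnhds dhHat
    rw [hev.deriv_eq, deriv_fun_sub Dh' (Dg'.const_mul _), deriv_const_mul _ Dg']
  -- derivative of the dilatation at ζ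
  have dω : deriv (dil h g) ζ
      = (deriv (deriv g) ζ * deriv h ζ - deriv g ζ * deriv (deriv h) ζ) / (deriv h ζ)^2 := by
    unfold dil
    exact deriv_div Dg' Dh' h1
  -- derivative of gHat at ζ vanishes
  have dgHat : deriv gHat ζ = 0 := by
    rw [hgHat, deriv_fun_sub (hg.differentiableAt hnhds)
      ((hh.differentiableAt hnhds).const_mul _),
      deriv_const_mul _ (hh.differentiableAt hnhds), hg1]
    ring
  have dilHat : dil hHat gHat ζ = 0 := by
    unfold dil; rw [dgHat, zero_div]
  -- pre-Schwarzian identity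
  have hpre : preSch hHat ζ = preSchH h g ζ := by
    unfold preSch preSchH
    rw [d2hHat, dhHatζ, dω, ← hc, preSch, hg1,
      show ((1 - ‖c‖^2 : ℝ) : ℂ) = 1 - (starRingEnd ℂ) c * c by
        push_cast; rw [Complex.conj_mul']]
    have hden1 : deriv h ζ * (1 - (starRingEnd ℂ) c * c) ≠ 0 :=
      mul_ne_zero h1 hone
    field_simp
    ring
  have hdenAB : denA hHat ζ = denB h g ζ := by
    unfold denA denB; rw [hpre]
  have hphi : phiA hHat ζ = (1 - (starRingEnd ℂ) c * c) * phiB h g ζ := by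
    unfold phiA phiB
    rw [hdenAB, dhHatζ]
    ring
  -- final algebra
  unfold extA extB
  rw [hphi, dilHat, hhHat, hgHat, ← hc]
  simp only [map_zero, zero_mul, add_zero, map_sub, map_mul, map_add, Complex.conj_conj]
  ring
end

section
/- Let f = h + conj(g) be a sense-preserving harmonic mapping on 𝔻 with dilatation ω = g'/h' satisfying |ω| < 1 and h' nonvanishing, and let a ∈ 𝔻. Write f₁ = f + a conj(f) = h₁ + conj(g₁), where h₁ = h + a g and g₁ = g + conj(a) h. Then f₁ is sense-preserving (its dilatation ω₁ = (ω + conj(a))/(1 + a ω) satisfies |ω₁| < 1), and the case-(B) extensions satisfy E^B_{f₁}(ζ) = E^B_f(ζ) + a · conj(E^B_f(ζ)) for every ζ ∈ 𝔻 with conj(ζ) − (1/2)(1 − |ζ|²) P_f(ζ) ≠ 0. -/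
open Metric

lemma ofReal_one_sub_sq_norm (x : ℂ) :
    ((1 - ‖x‖ ^ 2 : ℝ) : ℂ) = 1 - x * (starRingEnd ℂ) x := by
  rw [Complex.mul_conj]
  have : (‖x‖ ^ 2 : ℝ) = Complex.normSq x := by
    rw [Complex.sq_norm]
  rw [this]
  push_cast
  ring

lemma one_add_mul_ne (a W : ℂ) (ha : ‖a‖ < 1) (hW : ‖W‖ < 1) : (1 : ℂ) + a * W ≠ 0 := by
  intro hc
  have h1 : a * W = -1 := by linear_combination hc
  have : ‖a * W‖ < 1 := by
    rw [norm_mul]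
    calc ‖a‖ * ‖W‖ ≤ ‖a‖ * 1 := by nlinarith [norm_nonneg a, norm_nonneg W]
    _ < 1 := by linarith
  rw [h1] at this
  simp at this

lemma one_sub_mul_conj_ne (x : ℂ) (hx : ‖x‖ < 1) :
    (1 : ℂ) - x * (starRingEnd ℂ) x ≠ 0 := by
  rw [← ofReal_one_sub_sq_norm]
  rw [Complex.ofReal_ne_zero]
  nlinarith [norm_nonneg x]

lemma normsq_mobius (a W : ℂ) (ha : ‖a‖ < 1) (hW : ‖W‖ < 1) :
    ‖(W + (starRingEnd ℂ) a) / (1 + a * W)‖ < 1 := by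
  have hden : (1 : ℂ) + a * W ≠ 0 := one_add_mul_ne a W ha hW
  rw [norm_div, div_lt_one (norm_pos_iff.mpr hden)]
  have key : Complex.normSq (1 + a * W) - Complex.normSq (W + (starRingEnd ℂ) a)
      = (1 - Complex.normSq a) * (1 - Complex.normSq W) := by
    simp [Complex.normSq_apply, Complex.add_re, Complex.add_im, Complex.mul_re,
      Complex.mul_im, Complex.one_re, Complex.one_im, Complex.conj_re, Complex.conj_im]
    ring
  have hA : Complex.normSq a < 1 := by
    rw [← Complex.sq_norm]; nlinarith [norm_nonneg a]
  have hWW : Complex.normSq W < 1 := by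
    rw [← Complex.sq_norm]; nlinarith [norm_nonneg W]
  have h2 : Complex.normSq (W + (starRingEnd ℂ) a) < Complex.normSq (1 + a * W) := by
    nlinarith
  have e1 : ∀ z : ℂ, Complex.normSq z = ‖z‖ ^ 2 := by
    intro z; rw [← Complex.sq_norm]
  rw [e1, e1] at h2
  exact lt_of_pow_lt_pow_left₀ 2 (norm_nonneg _) h2

lemma mobius_preSch_algebra (a ca W cW H G H2 G2 D : ℂ)
    (hH : H ≠ 0) (h1 : 1 + a * W ≠ 0) (h2 : 1 + ca * cW ≠ 0)
    (h3 : 1 - W * cW ≠ 0) (h4 : 1 - a * ca ≠ 0)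
    (hW : W = G / H) (hD : D = (G2 * H - G * H2) / H ^ 2) :
    (H2 + a * G2) / (H + a * G) -
      ((cW + a) / (1 + ca * cW)) * (D * (1 - a * ca) / (1 + a * W) ^ 2) /
        (1 - ((W + ca) / (1 + a * W)) * ((cW + a) / (1 + ca * cW)))
    = H2 / H - cW * D / (1 - W * cW) := by
  have hHG : H + a * G = H * (1 + a * W) := by rw [hW]; field_simp
  have hHGne : H + a * G ≠ 0 := by rw [hHG]; exact mul_ne_zero hH h1
  have step1 : (H2 + a * G2) / (H + a * G) = H2 / H + a * D / (1 + a * W) := by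
    rw [hD, hW] at *
    field_simp
    ring
  have hnum : 1 - ((W + ca) / (1 + a * W)) * ((cW + a) / (1 + ca * cW))
      = (1 - a * ca) * (1 - W * cW) / ((1 + a * W) * (1 + ca * cW)) := by
    rw [div_mul_div_comm, one_sub_div (mul_ne_zero h1 h2)]
    congr 1
    ring
  have step2 : ((cW + a) / (1 + ca * cW)) * (D * (1 - a * ca) / (1 + a * W) ^ 2) /
        (1 - ((W + ca) / (1 + a * W)) * ((cW + a) / (1 + ca * cW)))
      = (cW + a) * D / ((1 + a * W) * (1 - W * cW)) := by
    rw [hnum]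
    rw [div_mul_div_comm, div_div_div_eq, div_eq_div_iff
      (mul_ne_zero (mul_ne_zero h2 (pow_ne_zero 2 h1)) (mul_ne_zero h4 h3)) (mul_ne_zero h1 h3)]
    ring
  rw [step1, step2]
  field_simp
  ring


set_option maxHeartbeats 1000000 in
/-- Affine invariance of the case-(B) extension: `E^B_{f + a conj f} = E^B_f + a conj(E^B_f)`. -/
theorem extB_affine_invariance
    (h g : ℂ → ℂ)
    (hh : DifferentiableOn ℂ h (ball 0 1)) (hg : DifferentiableOn ℂ g (ball 0 1))
    (hsp : ∀ w ∈ ball (0 : ℂ) 1, ‖dil h g w‖ < 1)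
    (hh' : ∀ w ∈ ball (0 : ℂ) 1, deriv h w ≠ 0)
    (a : ℂ) (ha : a ∈ ball (0 : ℂ) 1)
    (h₁ g₁ : ℂ → ℂ)
    (hh₁ : h₁ = fun z => h z + a * g z)
    (hg₁ : g₁ = fun z => g z + (starRingEnd ℂ) a * h z) :
    (∀ z ∈ ball (0 : ℂ) 1,
        dil h₁ g₁ z = (dil h g z + (starRingEnd ℂ) a) / (1 + a * dil h g z) ∧
        ‖dil h₁ g₁ z‖ < 1) ∧
      ∀ ζ ∈ ball (0 : ℂ) 1, denB h g ζ ≠ 0 →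
        extB h₁ g₁ ζ = extB h g ζ + a * (starRingEnd ℂ) (extB h g ζ) := by
  have haa : ‖a‖ < 1 := by simpa using ha
  have hha : AnalyticOnNhd ℂ h (ball 0 1) := hh.analyticOnNhd isOpen_ball
  have hga : AnalyticOnNhd ℂ g (ball 0 1) := hg.analyticOnNhd isOpen_ball
  have hdh : ∀ z ∈ ball (0 : ℂ) 1, DifferentiableAt ℂ h z :=
    fun z hz => (hha z hz).differentiableAt
  have hdg : ∀ z ∈ ball (0 : ℂ) 1, DifferentiableAt ℂ g z :=
    fun z hz => (hga z hz).differentiableAt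
  have hdh' : ∀ z ∈ ball (0 : ℂ) 1, DifferentiableAt ℂ (deriv h) z :=
    fun z hz => (hha.deriv z hz).differentiableAt
  have hdg' : ∀ z ∈ ball (0 : ℂ) 1, DifferentiableAt ℂ (deriv g) z :=
    fun z hz => (hga.deriv z hz).differentiableAt
  have hdildef : dil h g = fun z => deriv g z / deriv h z := rfl
  have hder1 : ∀ z ∈ ball (0 : ℂ) 1, deriv h₁ z = deriv h z + a * deriv g z := by
    intro z hz
    rw [hh₁, deriv_fun_add (hdh z hz) ((hdg z hz).const_mul a), deriv_const_mul a (hdg z hz)]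
  have hder2 : ∀ z ∈ ball (0 : ℂ) 1,
      deriv g₁ z = deriv g z + (starRingEnd ℂ) a * deriv h z := by
    intro z hz
    rw [hg₁, deriv_fun_add (hdg z hz) ((hdh z hz).const_mul _),
      deriv_const_mul _ (hdh z hz)]
  have hone : ∀ z ∈ ball (0 : ℂ) 1, (1 : ℂ) + a * dil h g z ≠ 0 :=
    fun z hz => one_add_mul_ne a _ haa (hsp z hz)
  have hder1ne : ∀ z ∈ ball (0 : ℂ) 1, deriv h z + a * deriv g z ≠ 0 := by
    intro z hz
    have : deriv h z + a * deriv g z = deriv h z * (1 + a * dil h g z) := by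
      rw [hdildef]
      field_simp [hh' z hz]
    rw [this]
    exact mul_ne_zero (hh' z hz) (hone z hz)
  have part1 : ∀ z ∈ ball (0 : ℂ) 1,
      dil h₁ g₁ z = (dil h g z + (starRingEnd ℂ) a) / (1 + a * dil h g z) := by
    intro z hz
    have hH := hh' z hz
    have hne := hder1ne z hz
    have h1z := hone z hz
    rw [hdildef] at h1z ⊢
    show deriv g₁ z / deriv h₁ z = _
    rw [hder1 z hz, hder2 z hz]
    field_simp
  have hdilω : ∀ z ∈ ball (0 : ℂ) 1, DifferentiableAt ℂ (dil h g) z := by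
    intro z hz
    rw [hdildef]
    exact (hdg' z hz).div (hdh' z hz) (hh' z hz)
  refine ⟨fun z hz => ⟨part1 z hz, ?_⟩, ?_⟩
  · rw [part1 z hz]
    exact normsq_mobius a _ haa (hsp z hz)
  -- key: preSchH invariance
  have key : ∀ ζ ∈ ball (0 : ℂ) 1, preSchH h₁ g₁ ζ = preSchH h g ζ := by
    intro ζ hζ
    set H := deriv h ζ with hHdef
    set G := deriv g ζ with hGdef
    set H2 := deriv (deriv h) ζ with hH2def
    set G2 := deriv (deriv g) ζ with hG2def
    set W := dil h g ζ with hWdef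
    set D := deriv (dil h g) ζ with hDdef
    set ca := (starRingEnd ℂ) a with hcadef
    set cW := (starRingEnd ℂ) W with hcWdef
    have hH : H ≠ 0 := hh' ζ hζ
    have hWlt : ‖W‖ < 1 := hsp ζ hζ
    have h1 : (1 : ℂ) + a * W ≠ 0 := hone ζ hζ
    have h2 : (1 : ℂ) + ca * cW ≠ 0 := by
      intro hc
      apply h1
      have := congrArg (starRingEnd ℂ) hc
      simpa [hcadef, hcWdef] using this
    have h3 : (1 : ℂ) - W * cW ≠ 0 := one_sub_mul_conj_ne W hWlt
    have h4 : (1 : ℂ) - a * ca ≠ 0 := one_sub_mul_conj_ne a haa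
    have hWeq : W = G / H := rfl
    have hDeq : D = (G2 * H - G * H2) / H ^ 2 := by
      rw [hDdef, hdildef, deriv_fun_div (hdg' ζ hζ) (hdh' ζ hζ) hH]
    have e1 : deriv h₁ ζ = H + a * G := hder1 ζ hζ
    have e2 : deriv (deriv h₁) ζ = H2 + a * G2 := by
      have hev : deriv h₁ =ᶠ[nhds ζ] fun z => deriv h z + a * deriv g z :=
        Filter.eventually_of_mem (isOpen_ball.mem_nhds hζ) hder1
      rw [hev.deriv_eq, deriv_fun_add (hdh' ζ hζ) ((hdg' ζ hζ).const_mul a),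
        deriv_const_mul a (hdg' ζ hζ)]
    have e3 : dil h₁ g₁ ζ = (W + ca) / (1 + a * W) := part1 ζ hζ
    have e3c : (starRingEnd ℂ) (dil h₁ g₁ ζ) = (cW + a) / (1 + ca * cW) := by
      rw [e3, map_div₀, map_add, map_add, map_mul]
      simp [hcadef, hcWdef]
    have e4 : deriv (dil h₁ g₁) ζ = D * (1 - a * ca) / (1 + a * W) ^ 2 := by
      have hev : dil h₁ g₁ =ᶠ[nhds ζ]
          fun z => (dil h g z + ca) / (1 + a * dil h g z) :=
        Filter.eventually_of_mem (isOpen_ball.mem_nhds hζ) part1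
      rw [hev.deriv_eq,
        deriv_fun_div ((hdilω ζ hζ).add_const ca)
          (((hdilω ζ hζ).const_mul a).const_add 1) h1,
        deriv_add_const, deriv_const_add, deriv_const_mul a (hdilω ζ hζ)]
      rw [← hWdef, ← hDdef]
      congr 1
      ring
    simp only [preSchH, preSch]
    rw [ofReal_one_sub_sq_norm, ofReal_one_sub_sq_norm, e1, e2, e3c, e3, e4,
      ← hH2def, ← hHdef, ← hWdef, ← hDdef, ← hcWdef]
    exact mobius_preSch_algebra a ca W cW H G H2 G2 D hH h1 h2 h3 h4 hWeq hDeq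
  -- final extension equality
  intro ζ hζ hden
  have hdenB : denB h₁ g₁ ζ = denB h g ζ := by
    unfold denB
    rw [key ζ hζ]
  set H := deriv h ζ with hHdef
  set G := deriv g ζ with hGdef
  set W := dil h g ζ with hWdef
  set ca := (starRingEnd ℂ) a with hcadef
  set cW := (starRingEnd ℂ) W with hcWdef
  have hH : H ≠ 0 := hh' ζ hζ
  have h1 : (1 : ℂ) + a * W ≠ 0 := hone ζ hζ
  have h2 : (1 : ℂ) + ca * cW ≠ 0 := by
    intro hc
    apply h1
    have := congrArg (starRingEnd ℂ) hc
    simpa [hcadef, hcWdef] using this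
  have hphi : phiB h₁ g₁ ζ = (1 + a * W) * phiB h g ζ := by
    unfold phiB
    rw [hdenB, hder1 ζ hζ, ← hHdef, ← hGdef]
    have hG : G = W * H := by
      rw [hWdef, hdildef]
      field_simp [hH]
      exact (mul_div_cancel_right₀ _ hH).symm
    rw [hG]
    rw [show ((1 - ‖ζ‖ ^ 2 : ℝ) : ℂ) * (H + a * (W * H))
        = (1 + a * W) * (((1 - ‖ζ‖ ^ 2 : ℝ) : ℂ) * H) from by ring]
    rw [mul_div_assoc]
  have e3 : dil h₁ g₁ ζ = (W + ca) / (1 + a * W) := part1 ζ hζ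
  have e3c : (starRingEnd ℂ) (dil h₁ g₁ ζ) = (cW + a) / (1 + ca * cW) := by
    rw [e3, map_div₀, map_add, map_add, map_mul]
    simp [hcadef, hcWdef]
  simp only [extB]
  rw [hphi, e3c, hh₁, hg₁]
  simp only [map_add, map_mul, Complex.conj_conj, ← hcadef, ← hcWdef, ← hWdef]
  have hcc : (starRingEnd ℂ) ca = a := by rw [hcadef]; exact Complex.conj_conj a
  have hccW : (starRingEnd ℂ) cW = W := by rw [hcWdef]; exact Complex.conj_conj W
  rw [hcc, hccW]
  have h2' : (1 : ℂ) + cW * ca ≠ 0 := by rw [mul_comm]; exact h2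
  simp only [map_one]
  field_simp
  ring
end

section
/- Let X = ℂ ∪ {∞} be the Riemann sphere, i.e. the one-point compactification of ℂ with its usual topology. If F : X → X is continuous and locally homeomorphic — every point of X has an open neighborhood U such that F restricted to U is a homeomorphism onto an open subset of X — then F is a homeomorphism of X onto X. -/
open OnePoint Set Topology Filter

namespace RSLH

variable {F : OnePoint ℂ → OnePoint ℂ}

/-- Uniqueness of lifts through a local homeomorphism. -/
theorem lift_unique (hloc : IsLocalHomeomorph F) {A : Type*} [TopologicalSpace A] {s : Set A}
    (hs : IsPreconnected s) {g₁ g₂ : A → OnePoint ℂ} (h₁ : ContinuousOn g₁ s)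
    (h₂ : ContinuousOn g₂ s) (he : Set.EqOn (F ∘ g₁) (F ∘ g₂) s) {a : A} (has : a ∈ s)
    (ha : g₁ a = g₂ a) : Set.EqOn g₁ g₂ s :=
  (T2Space.isSeparatedMap F).eqOn_of_comp_eqOn hloc.isLocallyInjective hs h₁ h₂ he has ha

theorem continuousOn_union_closed {α β : Type*} [TopologicalSpace α] [TopologicalSpace β]
    {f : α → β} {s t : Set α} (hs : IsClosed s) (ht : IsClosed t)
    (h₁ : ContinuousOn f s) (h₂ : ContinuousOn f t) : ContinuousOn f (s ∪ t) := by
  intro x hx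
  have hs' : ContinuousWithinAt f s x := by
    by_cases h : x ∈ s
    · exact h₁ x h
    · exact continuousWithinAt_of_notMem_closure (by rwa [hs.closure_eq])
  have ht' : ContinuousWithinAt f t x := by
    by_cases h : x ∈ t
    · exact h₂ x h
    · exact continuousWithinAt_of_notMem_closure (by rwa [ht.closure_eq])
  exact hs'.union ht'

/-- Every point of the target has an open neighborhood `V` such that every preimage of a point
of `V` lies on a continuous section of `F` defined on all of `V`. -/
theorem evenly (hcont : Continuous F) (hloc : IsLocalHomeomorph F) (y : OnePoint ℂ) :
    ∃ V : Set (OnePoint ℂ), IsOpen V ∧ y ∈ V ∧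
      ∀ x, F x ∈ V → ∃ σ : OnePoint ℂ → OnePoint ℂ,
        ContinuousOn σ V ∧ (∀ v ∈ V, F (σ v) = v) ∧ σ (F x) = x := by
  classical
  have hK : IsCompact (F ⁻¹' {y}) := (isClosed_singleton.preimage hcont).isCompact
  choose e he₁ he₂ using hloc
  obtain ⟨t, ht⟩ := hK.elim_finite_subcover (fun x : F ⁻¹' {y} => (e x).source)
    (fun x => (e x).open_source) (fun x hx => mem_iUnion.2 ⟨⟨x, hx⟩, he₁ x⟩)
  set U : Set (OnePoint ℂ) := ⋃ i ∈ t, (e i).source with hU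
  have hUopen : IsOpen U := isOpen_biUnion fun i _ => (e i).open_source
  have hCc : IsCompact (Uᶜ) := hUopen.isClosed_compl.isCompact
  have hFCc : IsClosed (F '' Uᶜ) := (hCc.image hcont).isClosed
  have hyC : y ∉ F '' Uᶜ := by
    rintro ⟨x, hxU, hxy⟩
    exact hxU (ht hxy)
  have hFe : ∀ (x v : OnePoint ℂ), F v = e x v := fun x v => congrFun (he₂ x) v
  refine ⟨(⋂ i ∈ t, (e i).target) \ F '' Uᶜ, ?_, ?_, ?_⟩
  · refine IsOpen.sdiff ?_ hFCc
    exact isOpen_biInter_finset fun i _ => (e i).open_target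
  · refine ⟨mem_iInter₂.2 fun i hi => ?_, hyC⟩
    have : F i.1 ∈ (e i).target := by
      rw [hFe i]
      exact (e i).map_source (he₁ i)
    rwa [i.2] at this
  · intro x hx
    have hxU : x ∈ U := by
      by_contra hxU
      exact hx.2 ⟨x, hxU, rfl⟩
    obtain ⟨i, hit, hxi⟩ : ∃ i ∈ t, x ∈ (e i).source := by
      simpa [hU, mem_iUnion] using hxU
    refine ⟨(e i).symm, (e i).continuousOn_symm.mono fun v hv => ?_, fun v hv => ?_, ?_⟩
    · exact mem_iInter₂.1 hv.1 i hit
    · rw [hFe i]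
      exact (e i).right_inv (mem_iInter₂.1 hv.1 i hit)
    · rw [show F x = e i x from hFe i x]
      exact (e i).left_inv hxi

theorem tube (hloc : IsLocalHomeomorph F)
    (hev : ∀ y : OnePoint ℂ, ∃ V : Set (OnePoint ℂ), IsOpen V ∧ y ∈ V ∧
      ∀ x, F x ∈ V → ∃ σ : OnePoint ℂ → OnePoint ℂ,
        ContinuousOn σ V ∧ (∀ v ∈ V, F (σ v) = v) ∧ σ (F x) = x)
    {H : ℝ × ℝ → OnePoint ℂ} (hH : Continuous H)
    {h : ℝ → OnePoint ℂ} (hh : Continuous h) (hlift : ∀ u, F (h u) = H (u, 0))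
    (u₁ : ℝ) {M : ℝ} (hM : 0 ≤ M) :
    ∃ ε > 0, ∃ G : ℝ × ℝ → OnePoint ℂ,
      ContinuousOn G (Icc (u₁ - ε) (u₁ + ε) ×ˢ Icc 0 M) ∧
      (∀ u ∈ Icc (u₁ - ε) (u₁ + ε), G (u, 0) = h u) ∧
      (∀ p ∈ Icc (u₁ - ε) (u₁ + ε) ×ˢ Icc 0 M, F (G p) = H p) := by
  set A : Set ℝ := {t | t ∈ Icc 0 M ∧ ∃ ε > 0, ∃ G : ℝ × ℝ → OnePoint ℂ,
      ContinuousOn G (Icc (u₁ - ε) (u₁ + ε) ×ˢ Icc 0 t) ∧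
      (∀ u ∈ Icc (u₁ - ε) (u₁ + ε), G (u, 0) = h u) ∧
      (∀ p ∈ Icc (u₁ - ε) (u₁ + ε) ×ˢ Icc 0 t, F (G p) = H p)} with hA
  suffices hMA : M ∈ A by exact hMA.2
  by_contra hMA
  have h0A : (0:ℝ) ∈ A := by
    refine ⟨⟨le_refl 0, hM⟩, 1, one_pos, fun p => h p.1, ?_, fun u _ => rfl, ?_⟩
    · exact (hh.comp continuous_fst).continuousOn
    · rintro ⟨u, v⟩ ⟨-, hv0, hv0'⟩
      have : v = 0 := le_antisymm hv0' hv0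
      subst this
      exact hlift u
  have hne : A.Nonempty := ⟨0, h0A⟩
  have hbdd : BddAbove A := ⟨M, fun t ht => ht.1.2⟩
  set c := sSup A with hc
  have hc0 : 0 ≤ c := le_csSup hbdd h0A
  have hcM : c ≤ M := csSup_le hne fun t ht => ht.1.2
  obtain ⟨V, hVopen, hVmem, hVsec⟩ := hev (H (u₁, c))
  obtain ⟨δ, hδ0, hδ⟩ : ∃ δ > 0, ∀ u v : ℝ, dist u u₁ < δ → dist v c < δ → H (u, v) ∈ V := by
    have := (hH.continuousAt (x := (u₁, c))).preimage_mem_nhds (hVopen.mem_nhds hVmem)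
    rw [Metric.mem_nhds_iff] at this
    obtain ⟨δ, hδ0, hball⟩ := this
    refine ⟨δ, hδ0, fun u v hu hv => hball ?_⟩
    rw [Metric.mem_ball, Prod.dist_eq]
    exact max_lt hu hv
  obtain ⟨t₁, ht₁A, ht₁⟩ := exists_lt_of_lt_csSup hne (by linarith : c - δ < sSup A)
  have ht₁c : t₁ ≤ c := le_csSup hbdd ht₁A
  obtain ⟨⟨ht₁0, ht₁M⟩, ε₁, hε₁, G₁, hG₁cont, hG₁base, hG₁lift⟩ := ht₁A
  set ε₂ := min ε₁ (δ/2) with hε₂def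
  have hε₂ : 0 < ε₂ := lt_min hε₁ (by linarith)
  have hε₂ε₁ : ε₂ ≤ ε₁ := min_le_left _ _
  have hε₂δ : ε₂ ≤ δ/2 := min_le_right _ _
  set t₂ := min (c + δ/2) M with ht₂def
  have ht₁t₂ : t₁ ≤ t₂ := le_min (by linarith) ht₁M
  have ht₂0 : 0 ≤ t₂ := le_trans ht₁0 ht₁t₂
  have hu₁mem : ∀ {ε : ℝ}, 0 < ε → u₁ ∈ Icc (u₁ - ε) (u₁ + ε) := fun hε =>
    ⟨by linarith, by linarith⟩
  have hdist : ∀ v : ℝ, t₁ ≤ v → v ≤ t₂ → dist v c < δ := by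
    intro v hv1 hv2
    rw [Real.dist_eq, abs_lt]
    have hvle : v ≤ c + δ/2 := le_trans hv2 (min_le_left _ _)
    constructor <;> linarith
  -- the section through G₁ (u₁, t₁)
  have hq : F (G₁ (u₁, t₁)) = H (u₁, t₁) :=
    hG₁lift (u₁, t₁) ⟨hu₁mem hε₁, ht₁0, le_refl _⟩
  have hHV : ∀ u v : ℝ, u ∈ Icc (u₁ - ε₂) (u₁ + ε₂) → t₁ ≤ v → v ≤ t₂ → H (u, v) ∈ V := by
    intro u v hu hv1 hv2
    refine hδ u v ?_ (hdist v hv1 hv2)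
    rw [Real.dist_eq, abs_lt]
    obtain ⟨hu1, hu2⟩ := hu
    constructor <;> [linarith [hε₂δ]; linarith [hε₂δ]]
  obtain ⟨σ, hσcont, hσsec, hσq⟩ := hVsec (G₁ (u₁, t₁))
    (by rw [hq]; exact hHV u₁ t₁ (hu₁mem hε₂) (le_refl _) ht₁t₂)
  rw [hq] at hσq
  -- equality on the segment v = t₁
  have hseg : Set.EqOn (fun u => G₁ (u, t₁)) (fun u => σ (H (u, t₁)))
      (Icc (u₁ - ε₂) (u₁ + ε₂)) := by
    refine lift_unique hloc isPreconnected_Icc ?_ ?_ ?_ (hu₁mem hε₂) hσq.symm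
    · refine hG₁cont.comp (Continuous.continuousOn (continuous_id.prodMk continuous_const)) ?_
      intro u hu
      exact ⟨⟨by linarith [hu.1, hε₂ε₁], by linarith [hu.2, hε₂ε₁]⟩, ht₁0, le_refl _⟩
    · refine hσcont.comp (hH.comp (continuous_id.prodMk continuous_const)).continuousOn ?_
      intro u hu
      exact hHV u t₁ hu (le_refl _) ht₁t₂
    · intro u hu
      have h1 : F (G₁ (u, t₁)) = H (u, t₁) :=
        hG₁lift (u, t₁) ⟨⟨by linarith [hu.1, hε₂ε₁], by linarith [hu.2, hε₂ε₁]⟩, ht₁0, le_refl _⟩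
      have h2 : F (σ (H (u, t₁))) = H (u, t₁) := hσsec _ (hHV u t₁ hu (le_refl _) ht₁t₂)
      simp only [Function.comp]
      rw [h1, h2]
  -- the extended lift
  set G₂ : ℝ × ℝ → OnePoint ℂ := fun p => if p.2 ≤ t₁ then G₁ p else σ (H p) with hG₂def
  have hE1 : Set.EqOn G₂ G₁ (Icc (u₁ - ε₂) (u₁ + ε₂) ×ˢ Icc 0 t₁) := by
    rintro ⟨u, v⟩ ⟨hu, hv⟩
    simp only [hG₂def]
    rw [if_pos hv.2]
  have hE2 : Set.EqOn G₂ (fun p => σ (H p)) (Icc (u₁ - ε₂) (u₁ + ε₂) ×ˢ Icc t₁ t₂) := by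
    rintro ⟨u, v⟩ ⟨hu, hv⟩
    simp only [hG₂def]
    by_cases hvt : v ≤ t₁
    · have hveq : v = t₁ := le_antisymm hvt hv.1
      subst hveq
      rw [if_pos (le_refl _)]
      exact hseg hu
    · rw [if_neg hvt]
  have ht₂A : t₂ ∈ A := by
    refine ⟨⟨ht₂0, min_le_right _ _⟩, ε₂, hε₂, G₂, ?_, ?_, ?_⟩
    · have hsplit : Icc (u₁ - ε₂) (u₁ + ε₂) ×ˢ Icc 0 t₂ =
          (Icc (u₁ - ε₂) (u₁ + ε₂) ×ˢ Icc 0 t₁) ∪ (Icc (u₁ - ε₂) (u₁ + ε₂) ×ˢ Icc t₁ t₂) := by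
        rw [← Set.prod_union, Icc_union_Icc_eq_Icc ht₁0 ht₁t₂]
      rw [hsplit]
      refine continuousOn_union_closed (isClosed_Icc.prod isClosed_Icc)
        (isClosed_Icc.prod isClosed_Icc) ?_ ?_
      · refine ContinuousOn.congr ?_ hE1
        refine hG₁cont.mono ?_
        rintro ⟨u, v⟩ ⟨hu, hv⟩
        exact ⟨⟨by linarith [hu.1, hε₂ε₁], by linarith [hu.2, hε₂ε₁]⟩, hv⟩
      · refine ContinuousOn.congr ?_ hE2
        refine hσcont.comp hH.continuousOn ?_
        rintro ⟨u, v⟩ ⟨hu, hv⟩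
        exact hHV u v hu hv.1 hv.2
    · intro u hu
      simp only [hG₂def]
      rw [if_pos ht₁0]
      exact hG₁base u ⟨by linarith [hu.1, hε₂ε₁], by linarith [hu.2, hε₂ε₁]⟩
    · rintro ⟨u, v⟩ ⟨hu, hv⟩
      simp only [hG₂def]
      by_cases hvt : v ≤ t₁
      · rw [if_pos hvt]
        exact hG₁lift (u, v) ⟨⟨by linarith [hu.1, hε₂ε₁], by linarith [hu.2, hε₂ε₁]⟩, hv.1, hvt⟩
      · rw [if_neg hvt]
        exact hσsec _ (hHV u v hu (le_of_not_ge hvt) hv.2)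
  have ht₂c : t₂ ≤ c := le_csSup hbdd ht₂A
  rcases le_or_gt (c + δ/2) M with hcase | hcase
  · have : t₂ = c + δ/2 := min_eq_left hcase
    rw [this] at ht₂c
    linarith
  · have : t₂ = M := min_eq_right (by linarith)
    rw [this] at ht₂A
    exact hMA ht₂A

section
variable (hloc : IsLocalHomeomorph F)
    (hev : ∀ y : OnePoint ℂ, ∃ V : Set (OnePoint ℂ), IsOpen V ∧ y ∈ V ∧
      ∀ x, F x ∈ V → ∃ σ : OnePoint ℂ → OnePoint ℂ,
        ContinuousOn σ V ∧ (∀ v ∈ V, F (σ v) = v) ∧ σ (F x) = x)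
include hloc hev

/-- Lift of a path on `[0, M]` with prescribed starting point. -/
theorem pathLift {γ : ℝ → OnePoint ℂ} (hγ : Continuous γ) {x₀ : OnePoint ℂ}
    (hx₀ : F x₀ = γ 0) {M : ℝ} (hM : 0 ≤ M) :
    ∃ g : ℝ → OnePoint ℂ, ContinuousOn g (Icc 0 M) ∧ g 0 = x₀ ∧
      ∀ t ∈ Icc 0 M, F (g t) = γ t := by
  obtain ⟨ε, hε, G, hGcont, hGbase, hGlift⟩ := tube hloc hev
    (H := fun p : ℝ × ℝ => γ p.2) (hγ.comp continuous_snd)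
    (h := fun _ : ℝ => x₀) continuous_const (fun u => hx₀) 0 hM
  have h0mem : (0:ℝ) ∈ Icc (0 - ε) (0 + ε) := ⟨by linarith, by linarith⟩
  refine ⟨fun t => G (0, t), ?_, hGbase 0 h0mem, fun t ht => hGlift (0, t) ⟨h0mem, ht⟩⟩
  exact hGcont.comp (Continuous.continuousOn (continuous_const.prodMk continuous_id))
    fun t ht => ⟨h0mem, ht⟩

/-- Lift of a path defined on all of `ℝ`, with prescribed value at `t₀`. -/
theorem lineLift {γ : ℝ → OnePoint ℂ} (hγ : Continuous γ) {x₀ : OnePoint ℂ} {t₀ : ℝ}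
    (hx₀ : F x₀ = γ t₀) :
    ∃ g : ℝ → OnePoint ℂ, Continuous g ∧ g t₀ = x₀ ∧ ∀ t, F (g t) = γ t := by
  have key : ∀ n : ℕ, ∃ g : ℝ → OnePoint ℂ, ContinuousOn g (Icc (t₀ - n) (t₀ + n)) ∧
      g t₀ = x₀ ∧ ∀ t ∈ Icc (t₀ - n) (t₀ + n), F (g t) = γ t := by
    intro n
    have hn0 : (0:ℝ) ≤ n := n.cast_nonneg
    obtain ⟨gp, hgpc, hgp0, hgpl⟩ := pathLift hloc hev
      (γ := fun t => γ (t₀ + t)) (hγ.comp (continuous_const.add continuous_id))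
      (x₀ := x₀) (by simpa using hx₀) (M := (n:ℝ)) hn0
    obtain ⟨gm, hgmc, hgm0, hgml⟩ := pathLift hloc hev
      (γ := fun t => γ (t₀ - t)) (hγ.comp (continuous_const.sub continuous_id))
      (x₀ := x₀) (by simpa using hx₀) (M := (n:ℝ)) hn0
    refine ⟨fun t => if t₀ ≤ t then gp (t - t₀) else gm (t₀ - t), ?_, ?_, ?_⟩
    · have hsplit : Icc (t₀ - (n:ℝ)) (t₀ + n) = Icc (t₀ - n) t₀ ∪ Icc t₀ (t₀ + n) := by
        rw [Icc_union_Icc_eq_Icc (by linarith) (by linarith)]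
      rw [hsplit]
      refine continuousOn_union_closed isClosed_Icc isClosed_Icc ?_ ?_
      · refine ContinuousOn.congr (hgmc.comp
          (Continuous.continuousOn (continuous_const.sub continuous_id))
          (fun t ht => ⟨by simpa using ht.2, by simpa using by linarith [ht.1]⟩)) ?_
        intro t ht
        by_cases hc : t₀ ≤ t
        · have : t = t₀ := le_antisymm ht.2 hc
          subst this
          simp [hgp0, hgm0]
        · simp [if_neg hc]
      · refine ContinuousOn.congr (hgpc.comp
          (Continuous.continuousOn (continuous_id.sub continuous_const))
          (fun t ht => ⟨by simpa using ht.1, by simpa using by linarith [ht.2]⟩)) ?_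
        intro t ht
        simp [if_pos ht.1]
    · simp only [if_pos (le_refl t₀), sub_self, hgp0]
    · intro t ht
      by_cases hc : t₀ ≤ t
      · simp only [if_pos hc]
        have := hgpl (t - t₀) ⟨by linarith, by linarith [ht.2]⟩
        simpa using this
      · simp only [if_neg hc]
        have := hgml (t₀ - t) ⟨by linarith [not_le.1 hc], by linarith [ht.1]⟩
        simpa using this
  choose gl hglc hgl0 hgll using key
  have agree : ∀ m n : ℕ, m ≤ n → Set.EqOn (gl m) (gl n) (Icc (t₀ - m) (t₀ + m)) := by
    intro m n hmn
    have hm0 : (0:ℝ) ≤ m := m.cast_nonneg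
    have hmn' : (m:ℝ) ≤ n := Nat.cast_le.2 hmn
    have hsub : Icc (t₀ - (m:ℝ)) (t₀ + m) ⊆ Icc (t₀ - n) (t₀ + n) :=
      Icc_subset_Icc (by linarith) (by linarith)
    refine lift_unique hloc isPreconnected_Icc (hglc m) ((hglc n).mono hsub) ?_
      (⟨by linarith, by linarith⟩ : t₀ ∈ Icc (t₀ - (m:ℝ)) (t₀ + m)) (by rw [hgl0, hgl0])
    intro t ht
    simp only [Function.comp]
    rw [hgll m t ht, hgll n t (hsub ht)]
  set g : ℝ → OnePoint ℂ := fun t => gl (⌊|t - t₀|⌋₊ + 1) t with hgdef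
  have hgeq : ∀ n : ℕ, Set.EqOn g (gl (n + 1)) (Ioo (t₀ - n) (t₀ + n)) := by
    intro n t ht
    have habs : |t - t₀| < n := by
      rw [abs_lt]; constructor
      · linarith [ht.1]
      · linarith [ht.2]
    have h1 : ⌊|t - t₀|⌋₊ + 1 ≤ n + 1 := by
      have : ⌊|t - t₀|⌋₊ < n := (Nat.floor_lt (abs_nonneg _)).2 habs
      omega
    refine agree _ _ h1 ?_
    have hin : |t - t₀| ≤ ((⌊|t - t₀|⌋₊ + 1 : ℕ) : ℝ) := by
      push_cast
      exact (Nat.lt_floor_add_one _).le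
    rw [abs_le] at hin
    exact ⟨by linarith [hin.1], by linarith [hin.2]⟩
  refine ⟨g, ?_, ?_, ?_⟩
  · rw [continuous_iff_continuousAt]
    intro t
    set n : ℕ := ⌊|t - t₀|⌋₊ + 1 with hn
    have hnc : ((n + 1 : ℕ) : ℝ) = (n : ℝ) + 1 := by push_cast; ring
    have htmem : t ∈ Ioo (t₀ - (n:ℝ)) (t₀ + n) := by
      have : |t - t₀| < n := by
        rw [hn]; push_cast; exact Nat.lt_floor_add_one _
      rw [abs_lt] at this
      exact ⟨by linarith [this.1], by linarith [this.2]⟩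
    have hopen : IsOpen (Ioo (t₀ - (n:ℝ)) (t₀ + n)) := isOpen_Ioo
    have hsub : Ioo (t₀ - (n:ℝ)) (t₀ + n) ⊆ Icc (t₀ - ((n+1 : ℕ):ℝ)) (t₀ + ((n+1 : ℕ):ℝ)) := by
      intro s hs
      rw [hnc]
      exact ⟨by linarith [hs.1], by linarith [hs.2]⟩
    have hcont' : ContinuousAt (gl (n + 1)) t :=
      (hglc (n+1)).continuousAt (Filter.mem_of_superset (hopen.mem_nhds htmem) hsub)
    exact hcont'.congr (Filter.eventuallyEq_of_mem (hopen.mem_nhds htmem)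
      fun s hs => (hgeq n hs).symm)
  · show gl (⌊|t₀ - t₀|⌋₊ + 1) t₀ = x₀
    rw [sub_self, abs_zero, Nat.floor_zero]
    exact hgl0 1
  · intro t
    have hin : t ∈ Icc (t₀ - ((⌊|t - t₀|⌋₊ + 1 : ℕ) : ℝ)) (t₀ + ((⌊|t - t₀|⌋₊ + 1 : ℕ):ℝ)) := by
      have : |t - t₀| ≤ ((⌊|t - t₀|⌋₊ + 1 : ℕ) : ℝ) := by
        push_cast; exact (Nat.lt_floor_add_one _).le
      rw [abs_le] at this
      exact ⟨by linarith [this.1], by linarith [this.2]⟩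
    exact hgll _ t hin

/-- A global continuous section of `F` over the finite plane. -/
theorem sectionC {x₀ : OnePoint ℂ} (hx₀ : F x₀ = ((0 : ℂ) : OnePoint ℂ)) :
    ∃ s : ℂ → OnePoint ℂ, Continuous s ∧ ∀ z : ℂ, F (s z) = (z : OnePoint ℂ) := by
  set H : ℝ × ℝ → OnePoint ℂ := fun p => ((p.1 + p.2 * Complex.I : ℂ) : OnePoint ℂ) with hHdef
  have hHcont : Continuous H := by
    refine OnePoint.continuous_coe.comp ?_
    exact (Complex.continuous_ofReal.comp continuous_fst).add
      ((Complex.continuous_ofReal.comp continuous_snd).mul continuous_const)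
  have hH00 : F x₀ = H (0, 0) := by
    rw [hx₀, hHdef]
    norm_num
  obtain ⟨g₀, hg₀c, hg₀0, hg₀l⟩ := lineLift hloc hev
    (γ := fun u => H (u, 0)) (hHcont.comp (continuous_id.prodMk continuous_const)) hH00
  have hgv : ∀ u : ℝ, ∃ g : ℝ → OnePoint ℂ, Continuous g ∧ g 0 = g₀ u ∧
      ∀ v, F (g v) = H (u, v) := fun u =>
    lineLift hloc hev (γ := fun v => H (u, v))
      (hHcont.comp (continuous_const.prodMk continuous_id)) (hg₀l u)
  choose gv hgvc hgv0 hgvl using hgv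
  refine ⟨fun z => gv z.re z.im, ?_, fun z => by rw [hgvl, hHdef]; norm_num [Complex.re_add_im]⟩
  rw [continuous_iff_continuousAt]
  intro z₁
  set u₁ : ℝ := z₁.re with hu₁
  set M : ℝ := |z₁.im| + 1 with hM
  have hM0 : (0:ℝ) ≤ M := by positivity
  obtain ⟨εp, hεp, Gp, hGpc, hGpb, hGpl⟩ := tube hloc hev hHcont hg₀c hg₀l u₁ hM0
  obtain ⟨εm, hεm, Gm, hGmc, hGmb, hGml⟩ := tube hloc hev
    (H := fun p : ℝ × ℝ => H (p.1, -p.2))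
    (hHcont.comp (continuous_fst.prodMk continuous_snd.neg))
    hg₀c (fun u => by rw [hg₀l u]; norm_num) u₁ hM0
  set ε : ℝ := min εp εm with hε
  have hε0 : 0 < ε := lt_min hεp hεm
  have hεp' : ε ≤ εp := min_le_left _ _
  have hεm' : ε ≤ εm := min_le_right _ _
  have hsubp : Icc (u₁ - ε) (u₁ + ε) ⊆ Icc (u₁ - εp) (u₁ + εp) :=
    Icc_subset_Icc (by linarith) (by linarith)
  have hsubm : Icc (u₁ - ε) (u₁ + ε) ⊆ Icc (u₁ - εm) (u₁ + εm) :=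
    Icc_subset_Icc (by linarith) (by linarith)
  -- identification with the global family
  have clp : ∀ u ∈ Icc (u₁ - ε) (u₁ + ε), ∀ v ∈ Icc (0:ℝ) M, Gp (u, v) = gv u v := by
    intro u hu
    have := lift_unique hloc (isPreconnected_Icc (a := (0:ℝ)) (b := M))
      (g₁ := fun v => Gp (u, v)) (g₂ := gv u)
      (hGpc.comp (Continuous.continuousOn (continuous_const.prodMk continuous_id))
        fun v hv => ⟨hsubp hu, hv⟩)
      (hgvc u).continuousOn
      (fun v hv => by
        simp only [Function.comp]
        rw [hGpl (u, v) ⟨hsubp hu, hv⟩, hgvl u v])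
      (a := 0) ⟨le_refl _, hM0⟩
      (by show Gp (u, 0) = gv u 0; rw [hGpb u (hsubp hu), hgv0])
    exact fun v hv => this hv
  have clm : ∀ u ∈ Icc (u₁ - ε) (u₁ + ε), ∀ v ∈ Icc (0:ℝ) M, Gm (u, v) = gv u (-v) := by
    intro u hu
    have := lift_unique hloc (isPreconnected_Icc (a := (0:ℝ)) (b := M))
      (g₁ := fun v => Gm (u, v)) (g₂ := fun v => gv u (-v))
      (hGmc.comp (Continuous.continuousOn (continuous_const.prodMk continuous_id))
        fun v hv => ⟨hsubm hu, hv⟩)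
      ((hgvc u).comp continuous_neg).continuousOn
      (fun v hv => by
        simp only [Function.comp]
        rw [hGml (u, v) ⟨hsubm hu, hv⟩, hgvl u (-v)])
      (a := 0) ⟨le_refl _, hM0⟩
      (by show Gm (u, 0) = gv u (-0); rw [hGmb u (hsubm hu), neg_zero, hgv0])
    exact fun v hv => this hv
  -- glued double tube
  set Gt : ℝ × ℝ → OnePoint ℂ := fun p => if 0 ≤ p.2 then Gp p else Gm (p.1, -p.2) with hGt
  have hGtc : ContinuousOn Gt (Icc (u₁ - ε) (u₁ + ε) ×ˢ Icc (-M) M) := by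
    have hsplit : Icc (u₁ - ε) (u₁ + ε) ×ˢ Icc (-M) M =
        (Icc (u₁ - ε) (u₁ + ε) ×ˢ Icc (-M) 0) ∪ (Icc (u₁ - ε) (u₁ + ε) ×ˢ Icc 0 M) := by
      rw [← Set.prod_union, Icc_union_Icc_eq_Icc (by linarith) hM0]
    rw [hsplit]
    refine continuousOn_union_closed (isClosed_Icc.prod isClosed_Icc)
      (isClosed_Icc.prod isClosed_Icc) ?_ ?_
    · refine ContinuousOn.congr (f := fun p : ℝ × ℝ => Gm (p.1, -p.2)) ?_ ?_
      · refine hGmc.comp (Continuous.continuousOn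
          (continuous_fst.prodMk continuous_snd.neg)) ?_
        rintro ⟨u, v⟩ ⟨hu, hv⟩
        exact ⟨hsubm hu, by simpa using hv.2, by simpa using by linarith [hv.1]⟩
      · rintro ⟨u, v⟩ ⟨hu, hv⟩
        simp only [hGt]
        by_cases hv0 : 0 ≤ v
        · have : v = 0 := le_antisymm hv.2 hv0
          subst this
          rw [if_pos (le_refl _)]
          rw [hGpb u (hsubp hu), neg_zero, hGmb u (hsubm hu)]
        · rw [if_neg hv0]
    · refine ContinuousOn.congr (f := Gp) (hGpc.mono ?_) ?_
      · rintro ⟨u, v⟩ ⟨hu, hv⟩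
        exact ⟨hsubp hu, hv⟩
      · rintro ⟨u, v⟩ ⟨hu, hv⟩
        simp only [hGt]
        rw [if_pos hv.1]
  -- `s` agrees with the glued tube near `z₁`
  have hagree : ∀ z : ℂ, z.re ∈ Icc (u₁ - ε) (u₁ + ε) → z.im ∈ Icc (-M) M →
      gv z.re z.im = Gt (z.re, z.im) := by
    intro z hre him
    simp only [hGt]
    by_cases h0 : 0 ≤ z.im
    · rw [if_pos h0, clp z.re hre z.im ⟨h0, him.2⟩]
    · rw [if_neg h0, clm z.re hre (-z.im) ⟨by linarith [not_le.1 h0], by linarith [him.1]⟩,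
        neg_neg]
  have hmem : (z₁.re, z₁.im) ∈ Ioo (u₁ - ε) (u₁ + ε) ×ˢ Ioo (-M) M := by
    constructor
    · exact ⟨by simp [hu₁]; linarith, by simp [hu₁]; linarith⟩
    · have h1 : -M < z₁.im := by
        have := neg_abs_le z₁.im
        simp only [hM]; linarith
      have h2 : z₁.im < M := by
        have := le_abs_self z₁.im
        simp only [hM]; linarith
      exact ⟨h1, h2⟩
  have hopen : IsOpen (Ioo (u₁ - ε) (u₁ + ε) ×ˢ Ioo (-M) M) := isOpen_Ioo.prod isOpen_Ioo
  have hreim : Continuous fun z : ℂ => (z.re, z.im) :=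
    Complex.continuous_re.prodMk Complex.continuous_im
  have hnhds : Icc (u₁ - ε) (u₁ + ε) ×ˢ Icc (-M) M ∈ 𝓝 (z₁.re, z₁.im) :=
    Filter.mem_of_superset (hopen.mem_nhds hmem)
      (Set.prod_mono Ioo_subset_Icc_self Ioo_subset_Icc_self)
  have hGtat : ContinuousAt Gt (z₁.re, z₁.im) := hGtc.continuousAt hnhds
  have hcompat : ContinuousAt (fun z : ℂ => Gt (z.re, z.im)) z₁ :=
    ContinuousAt.comp (f := fun z : ℂ => (z.re, z.im)) (g := Gt) hGtat hreim.continuousAt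
  refine hcompat.congr ?_
  have hWopen : IsOpen ((fun z : ℂ => (z.re, z.im)) ⁻¹' (Ioo (u₁ - ε) (u₁ + ε) ×ˢ Ioo (-M) M)) :=
    hopen.preimage hreim
  refine Filter.eventuallyEq_of_mem (hWopen.mem_nhds hmem) ?_
  intro z hz
  exact (hagree z (Ioo_subset_Icc_self hz.1) (Ioo_subset_Icc_self hz.2)).symm

end

theorem main (hcont : Continuous F) (hloc : IsLocalHomeomorph F) :
    ∃ e : OnePoint ℂ ≃ₜ OnePoint ℂ, ⇑e = F := by
  -- surjectivity
  have hsurj : Function.Surjective F := by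
    have hclopen : IsClopen (Set.range F) :=
      ⟨(isCompact_range hcont).isClosed, hloc.isOpenMap.isOpen_range⟩
    have : Set.range F = univ := hclopen.eq_univ ⟨F ∞, mem_range_self _⟩
    exact fun y => by rw [← Set.mem_range, this]; trivial
  obtain ⟨x₀, hx₀⟩ := hsurj ((0 : ℂ) : OnePoint ℂ)
  obtain ⟨s, hsc, hsl⟩ := sectionC hloc (evenly hcont hloc) hx₀
  -- evenly covered neighborhood of ∞
  obtain ⟨V, hVopen, hVmem, hVsec⟩ := evenly hcont hloc ∞
  obtain ⟨hVcl, hVcp⟩ := (isOpen_iff_of_mem hVmem).1 hVopen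
  obtain ⟨r, hr⟩ := hVcp.isBounded.subset_closedBall 0
  set R : ℝ := max r 0 with hR
  have hR0 : 0 ≤ R := le_max_right _ _
  have hRV : ∀ z : ℂ, R < ‖z‖ → (z : OnePoint ℂ) ∈ V := by
    intro z hz
    by_contra hzV
    have : z ∈ Metric.closedBall (0:ℂ) r := hr hzV
    rw [Metric.mem_closedBall, dist_zero_right] at this
    have : ‖z‖ ≤ R := le_trans this (le_max_left _ _)
    linarith
  set U : Set ℂ := {z | R < ‖z‖} with hU
  -- U is preconnected
  have hUconn : IsPreconnected U := by
    have h2 : (1 : Cardinal) < Module.rank ℝ ℂ := by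
      rw [Complex.rank_real_complex]; norm_num
    have hsph : IsPreconnected (Metric.sphere (0:ℂ) 1) := isPreconnected_sphere h2 0 1
    have hprod : IsPreconnected ((Ioi R) ×ˢ (Metric.sphere (0:ℂ) 1)) :=
      (isPreconnected_Ioi).prod hsph
    have himg : (fun p : ℝ × ℂ => p.1 • p.2) '' ((Ioi R) ×ˢ (Metric.sphere (0:ℂ) 1)) = U := by
      apply Subset.antisymm
      · rintro _ ⟨⟨t, w⟩, ⟨ht, hw⟩, rfl⟩
        rw [mem_sphere_zero_iff_norm] at hw
        have ht' : R < t := ht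
        simp only [hU, mem_setOf_eq, norm_smul, Real.norm_eq_abs, hw, mul_one]
        rwa [abs_of_pos (lt_of_le_of_lt hR0 ht')]
      · intro z hz
        have hz' : R < ‖z‖ := hz
        have hz0 : z ≠ 0 := by
          intro h
          rw [h, norm_zero] at hz'
          linarith
        refine ⟨(‖z‖, ‖z‖⁻¹ • z), ⟨hz', ?_⟩, ?_⟩
        · rw [mem_sphere_zero_iff_norm, norm_smul, norm_inv, norm_norm,
            inv_mul_cancel₀ (norm_ne_zero_iff.2 hz0)]
        · simp only [smul_smul]
          rw [mul_inv_cancel₀ (norm_ne_zero_iff.2 hz0), one_smul]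
    rw [← himg]
    exact hprod.image _ (continuous_smul.comp continuous_id).continuousOn
  -- the section over U agrees with a single local section around ∞
  set zs : ℂ := ((R + 1 : ℝ) : ℂ) with hzs
  have hzsU : zs ∈ U := by
    simp only [hU, mem_setOf_eq, hzs, Complex.norm_real, Real.norm_eq_abs]
    rw [abs_of_pos (by linarith)]
    linarith
  obtain ⟨σ, hσcont, hσsec, hσz⟩ := hVsec (s zs) (by rw [hsl zs]; exact hRV zs hzsU)
  have hkey : Set.EqOn s (fun z : ℂ => σ (z : OnePoint ℂ)) U := by
    refine lift_unique hloc hUconn hsc.continuousOn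
      (hσcont.comp OnePoint.continuous_coe.continuousOn fun z hz => hRV z hz) ?_ hzsU ?_
    · intro z hz
      simp only [Function.comp]
      rw [hsl z, hσsec _ (hRV z hz)]
    · rw [hsl zs] at hσz
      exact hσz.symm
  -- the glued global section
  set sb : OnePoint ℂ → OnePoint ℂ := fun y => y.elim (σ ∞) s with hsb
  have hsbr : ∀ y, F (sb y) = y := by
    intro y
    induction y using OnePoint.rec with
    | infty => exact hσsec ∞ hVmem
    | coe z => exact hsl z
  -- continuity of the glued section
  set N : Set (OnePoint ℂ) := {∞} ∪ (fun z : ℂ => (z : OnePoint ℂ)) '' U with hN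
  have hNmem : ∞ ∈ N := Or.inl rfl
  have hNpre : (OnePoint.some) ⁻¹' N = U := by
    ext z
    simp only [hN, mem_preimage, mem_union, mem_singleton_iff, mem_image]
    constructor
    · rintro (h | ⟨w, hw, hwz⟩)
      · exact absurd h (coe_ne_infty z)
      · rwa [← coe_injective hwz]
    · intro h
      exact Or.inr ⟨z, h, rfl⟩
  have hNopen : IsOpen N := by
    rw [isOpen_iff_of_mem hNmem, hNpre]
    constructor
    · have : Uᶜ = Metric.closedBall (0:ℂ) R := by
        ext z
        simp [hU, Metric.mem_closedBall, dist_zero_right, not_lt]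
      rw [this]
      exact Metric.isClosed_closedBall
    · have : Uᶜ = Metric.closedBall (0:ℂ) R := by
        ext z
        simp [hU, Metric.mem_closedBall, dist_zero_right, not_lt]
      rw [this]
      exact isCompact_closedBall 0 R
  have hNV : N ⊆ V := by
    rintro y (h | ⟨z, hz, rfl⟩)
    · rw [h]; exact hVmem
    · exact hRV z hz
  have hsbN : Set.EqOn sb σ N := by
    rintro y (h | ⟨z, hz, rfl⟩)
    · rw [h]; rfl
    · exact hkey hz
  have hsbc : Continuous sb := by
    rw [continuous_iff_continuousAt]
    intro y
    induction y using OnePoint.rec with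
    | infty =>
      have hσat : ContinuousAt σ ∞ := hσcont.continuousAt (hVopen.mem_nhds hVmem)
      exact hσat.congr (Filter.eventuallyEq_of_mem (hNopen.mem_nhds hNmem)
        fun y hy => (hsbN hy).symm)
    | coe z =>
      rw [OnePoint.continuousAt_coe]
      exact (hsc.continuousAt (x := z)).congr (by
        filter_upwards with w
        rfl)
  -- the clopen set where sb ∘ F = id
  have hleft : ∀ x, sb (F x) = x := by
    have hclopen : IsClopen {x | sb (F x) = x} := by
      constructor
      · exact isClosed_eq (hsbc.comp hcont) continuous_id
      · rw [isOpen_iff_mem_nhds]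
        intro x hx
        obtain ⟨e, hxe, hFe⟩ := hloc x
        have hWopen : IsOpen (e.source ∩ (fun x' => sb (F x')) ⁻¹' e.source) :=
          e.open_source.inter (e.open_source.preimage (hsbc.comp hcont))
        have hxW : x ∈ e.source ∩ (fun x' => sb (F x')) ⁻¹' e.source := by
          refine ⟨hxe, ?_⟩
          show sb (F x) ∈ e.source
          rw [hx]
          exact hxe
        refine Filter.mem_of_superset (hWopen.mem_nhds hxW) ?_
        rintro x' ⟨hx'1, hx'2⟩
        show sb (F x') = x'
        refine e.injOn hx'2 hx'1 ?_
        have h1 : F (sb (F x')) = F x' := hsbr (F x')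
        calc e (sb (F x')) = F (sb (F x')) := by rw [hFe]
          _ = F x' := h1
          _ = e x' := by rw [hFe]
      
    have : {x | sb (F x) = x} = univ := hclopen.eq_univ ⟨sb ∞, by
      show sb (F (sb ∞)) = sb ∞
      rw [hsbr ∞]⟩
    intro x
    exact Set.eq_univ_iff_forall.1 this x
  exact ⟨⟨⟨F, sb, hleft, hsbr⟩, hcont, hsbc⟩, rfl⟩


end RSLH

open OnePoint

/-- A continuous, locally homeomorphic self-map of the Riemann sphere is a homeomorphism. -/
theorem localHomeomorph_riemannSphere_is_homeomorph
    (F : OnePoint ℂ → OnePoint ℂ)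
    (hcont : Continuous F)
    (hloc : IsLocalHomeomorph F) :
    ∃ e : OnePoint ℂ ≃ₜ OnePoint ℂ, ⇑e = F :=
  RSLH.main hcont hloc
end

section
/- Let h be holomorphic on 𝔻 with h' nonvanishing, let ζ ∈ 𝔻, and set D(ζ) = conj(ζ) − (1/2)(1 − |ζ|²) Ph(ζ) and Φ(ζ) = (1 − |ζ|²) h'(ζ)/D(ζ), assuming D(ζ) ≠ 0. Then, as Wirtinger derivatives of the smooth function Φ on the open set where D ≠ 0: (i) ∂_z̄ Φ(ζ) = − h'(ζ)/D(ζ)², and (ii) D(ζ)² + (D(ζ)²/h'(ζ)) ∂_z Φ(ζ) = (1/2)(1 − |ζ|²)² Sh(ζ). -/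
open Metric

set_option linter.unnecessarySimpa false

lemma wZ_of_holo {f : ℂ → ℂ} {z : ℂ} (hf : DifferentiableAt ℂ f z) :
    wZ f z = deriv f z := by
  have h1 : fderiv ℝ f z = (fderiv ℂ f z).restrictScalars ℝ := hf.fderiv_restrictScalars ℝ
  have h2 : ∀ v : ℂ, fderiv ℂ f z v = v * deriv f z := by
    intro v
    have := (fderiv ℂ f z).map_smul v 1
    simpa [smul_eq_mul, fderiv_apply_one_eq_deriv] using this
  simp only [wZ, h1, ContinuousLinearMap.coe_restrictScalars', h2]
  have : (Complex.I:ℂ)^2 = -1 := Complex.I_sq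
  field_simp
  linear_combination (-(deriv f z)) * this

lemma wZb_of_holo {f : ℂ → ℂ} {z : ℂ} (hf : DifferentiableAt ℂ f z) :
    wZb f z = 0 := by
  have h1 : fderiv ℝ f z = (fderiv ℂ f z).restrictScalars ℝ := hf.fderiv_restrictScalars ℝ
  have h2 : ∀ v : ℂ, fderiv ℂ f z v = v * deriv f z := by
    intro v
    have := (fderiv ℂ f z).map_smul v 1
    simpa [smul_eq_mul, fderiv_apply_one_eq_deriv] using this
  simp only [wZb, h1, ContinuousLinearMap.coe_restrictScalars', h2]
  have : (Complex.I:ℂ)^2 = -1 := Complex.I_sq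
  field_simp
  linear_combination (deriv f z) * this

lemma fderiv_conj (z : ℂ) :
    fderiv ℝ (fun w => (starRingEnd ℂ) w) z = Complex.conjCLE.toContinuousLinearMap := by
  have : HasFDerivAt (fun w => (starRingEnd ℂ) w) Complex.conjCLE.toContinuousLinearMap z :=
    Complex.conjCLE.toContinuousLinearMap.hasFDerivAt
  exact this.fderiv

lemma wZ_conj (z : ℂ) : wZ (fun w => (starRingEnd ℂ) w) z = 0 := by
  simp [wZ, fderiv_conj, Complex.conjCLE_apply, Complex.conj_I]

lemma wZb_conj (z : ℂ) : wZb (fun w => (starRingEnd ℂ) w) z = 1 := by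
  simp [wZb, fderiv_conj, Complex.conjCLE_apply, Complex.conj_I]

lemma wZ_mul {f g : ℂ → ℂ} {z : ℂ} (hf : DifferentiableAt ℝ f z)
    (hg : DifferentiableAt ℝ g z) :
    wZ (fun w => f w * g w) z = wZ f z * g z + f z * wZ g z := by
  simp only [wZ, fderiv_fun_mul hf hg, ContinuousLinearMap.add_apply,
    ContinuousLinearMap.smul_apply, smul_eq_mul]
  ring

lemma wZb_mul {f g : ℂ → ℂ} {z : ℂ} (hf : DifferentiableAt ℝ f z)
    (hg : DifferentiableAt ℝ g z) :
    wZb (fun w => f w * g w) z = wZb f z * g z + f z * wZb g z := by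
  simp only [wZb, fderiv_fun_mul hf hg, ContinuousLinearMap.add_apply,
    ContinuousLinearMap.smul_apply, smul_eq_mul]
  ring

lemma wZ_sub {f g : ℂ → ℂ} {z : ℂ} (hf : DifferentiableAt ℝ f z)
    (hg : DifferentiableAt ℝ g z) :
    wZ (fun w => f w - g w) z = wZ f z - wZ g z := by
  simp only [wZ, fderiv_fun_sub hf hg, ContinuousLinearMap.sub_apply]
  ring

lemma wZb_sub {f g : ℂ → ℂ} {z : ℂ} (hf : DifferentiableAt ℝ f z)
    (hg : DifferentiableAt ℝ g z) :
    wZb (fun w => f w - g w) z = wZb f z - wZb g z := by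
  simp only [wZb, fderiv_fun_sub hf hg, ContinuousLinearMap.sub_apply]
  ring

lemma wZ_comp {f g : ℂ → ℂ} {z : ℂ} (hf : DifferentiableAt ℂ f (g z))
    (hg : DifferentiableAt ℝ g z) :
    wZ (fun w => f (g w)) z = deriv f (g z) * wZ g z := by
  have hfd : fderiv ℝ f (g z) = (fderiv ℂ f (g z)).restrictScalars ℝ :=
    hf.fderiv_restrictScalars ℝ
  have h2 : ∀ v : ℂ, fderiv ℂ f (g z) v = v * deriv f (g z) := by
    intro v
    have := (fderiv ℂ f (g z)).map_smul v 1
    simpa [smul_eq_mul, fderiv_apply_one_eq_deriv] using this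
  have hc : fderiv ℝ (fun w => f (g w)) z = (fderiv ℝ f (g z)).comp (fderiv ℝ g z) :=
    fderiv_comp z (hf.restrictScalars ℝ) hg
  simp only [wZ, hc, ContinuousLinearMap.comp_apply, hfd,
    ContinuousLinearMap.coe_restrictScalars', h2]
  ring

lemma wZb_comp {f g : ℂ → ℂ} {z : ℂ} (hf : DifferentiableAt ℂ f (g z))
    (hg : DifferentiableAt ℝ g z) :
    wZb (fun w => f (g w)) z = deriv f (g z) * wZb g z := by
  have hfd : fderiv ℝ f (g z) = (fderiv ℂ f (g z)).restrictScalars ℝ :=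
    hf.fderiv_restrictScalars ℝ
  have h2 : ∀ v : ℂ, fderiv ℂ f (g z) v = v * deriv f (g z) := by
    intro v
    have := (fderiv ℂ f (g z)).map_smul v 1
    simpa [smul_eq_mul, fderiv_apply_one_eq_deriv] using this
  have hc : fderiv ℝ (fun w => f (g w)) z = (fderiv ℝ f (g z)).comp (fderiv ℝ g z) :=
    fderiv_comp z (hf.restrictScalars ℝ) hg
  simp only [wZb, hc, ContinuousLinearMap.comp_apply, hfd,
    ContinuousLinearMap.coe_restrictScalars', h2]
  ring

lemma wZ_inv {g : ℂ → ℂ} {z : ℂ} (hg : DifferentiableAt ℝ g z) (hgz : g z ≠ 0) :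
    wZ (fun w => (g w)⁻¹) z = -(wZ g z) / (g z) ^ 2 := by
  have h := wZ_comp (f := fun w : ℂ => w⁻¹) (differentiableAt_inv hgz) hg
  rw [h, deriv_inv]
  field_simp

lemma wZb_inv {g : ℂ → ℂ} {z : ℂ} (hg : DifferentiableAt ℝ g z) (hgz : g z ≠ 0) :
    wZb (fun w => (g w)⁻¹) z = -(wZb g z) / (g z) ^ 2 := by
  have h := wZb_comp (f := fun w : ℂ => w⁻¹) (differentiableAt_inv hgz) hg
  rw [h, deriv_inv]
  field_simp

lemma wZ_const (a : ℂ) (z : ℂ) : wZ (fun _ => a) z = 0 := by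
  simp [wZ]

lemma wZb_const (a : ℂ) (z : ℂ) : wZb (fun _ => a) z = 0 := by
  simp [wZb]

lemma wZ_id (z : ℂ) : wZ (fun w => w) z = 1 := by
  rw [wZ_of_holo differentiableAt_fun_id]
  simp

lemma wZb_id (z : ℂ) : wZb (fun w => w) z = 0 :=
  wZb_of_holo differentiableAt_fun_id

lemma q_eq (w : ℂ) : ((1 - ‖w‖^2 : ℝ):ℂ) = 1 - w * (starRingEnd ℂ) w := by
  rw [Complex.mul_conj]
  push_cast
  rw [Complex.normSq_eq_norm_sq]
  push_cast
  ring

/-- Wirtinger derivatives of `Φ(ζ) = (1-|ζ|²) h'(ζ)/D(ζ)` with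
`D(ζ) = conj ζ - (1/2)(1-|ζ|²) Ph(ζ)`. -/
theorem wirtinger_of_phiA
    (h : ℂ → ℂ) (hh : DifferentiableOn ℂ h (ball 0 1))
    (hh' : ∀ w ∈ ball (0 : ℂ) 1, deriv h w ≠ 0)
    (ζ : ℂ) (hζ : ζ ∈ ball (0 : ℂ) 1) (hden : denA h ζ ≠ 0) :
    wZb (phiA h) ζ = -deriv h ζ / (denA h ζ) ^ 2 ∧
      (denA h ζ) ^ 2 + ((denA h ζ) ^ 2 / deriv h ζ) * wZ (phiA h) ζ =
        (1 / 2) * ((1 - ‖ζ‖ ^ 2 : ℝ) : ℂ) ^ 2 * schw h ζ := by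
  have hA : AnalyticOnNhd ℂ h (ball 0 1) := hh.analyticOnNhd isOpen_ball
  have hd1 : DifferentiableAt ℂ (deriv h) ζ := (hA.deriv ζ hζ).differentiableAt
  have hd2 : DifferentiableAt ℂ (deriv (deriv h)) ζ := (hA.deriv.deriv ζ hζ).differentiableAt
  have hd0 : deriv h ζ ≠ 0 := hh' ζ hζ
  have hP : DifferentiableAt ℂ (preSch h) ζ := by
    unfold preSch; exact hd2.div hd1 hd0
  have hddP : deriv (deriv h) ζ = preSch h ζ * deriv h ζ := by
    unfold preSch; field_simp
  have hconj : DifferentiableAt ℝ (fun w => (starRingEnd ℂ) w) ζ :=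
    Complex.conjCLE.differentiableAt
  have hqfun : (fun w : ℂ => ((1 - ‖w‖^2:ℝ):ℂ)) = fun w => 1 - w * (starRingEnd ℂ) w :=
    funext q_eq
  have hqdiff : DifferentiableAt ℝ (fun w : ℂ => ((1 - ‖w‖^2:ℝ):ℂ)) ζ := by
    rw [hqfun]
    exact (differentiableAt_const _).sub (differentiableAt_fun_id.fun_mul hconj)
  have hd1R : DifferentiableAt ℝ (deriv h) ζ := hd1.restrictScalars ℝ
  have hPR : DifferentiableAt ℝ (preSch h) ζ := hP.restrictScalars ℝ
  have hNdiff : DifferentiableAt ℝ (fun w : ℂ => ((1 - ‖w‖^2:ℝ):ℂ) * deriv h w) ζ :=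
    hqdiff.mul hd1R
  have hDdiff : DifferentiableAt ℝ (denA h) ζ := by
    unfold denA
    exact hconj.sub (((differentiableAt_const _).mul hqdiff).fun_mul hPR)
  -- Wirtinger derivatives of q
  have hwq : wZ (fun w : ℂ => ((1 - ‖w‖^2:ℝ):ℂ)) ζ = -((starRingEnd ℂ) ζ) := by
    rw [hqfun, wZ_sub (differentiableAt_const _) (differentiableAt_fun_id.fun_mul hconj),
      wZ_const, wZ_mul differentiableAt_fun_id hconj, wZ_conj, wZ_id]
    ring
  have hwbq : wZb (fun w : ℂ => ((1 - ‖w‖^2:ℝ):ℂ)) ζ = -ζ := by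
    rw [hqfun, wZb_sub (differentiableAt_const _) (differentiableAt_fun_id.fun_mul hconj),
      wZb_const, wZb_mul differentiableAt_fun_id hconj, wZb_conj, wZb_id]
    ring
  -- Wirtinger derivatives of D = denA h
  have hwD : wZ (denA h) ζ =
      (1/2) * (starRingEnd ℂ) ζ * preSch h ζ
        - (1/2) * (1 - ζ * (starRingEnd ℂ) ζ) * deriv (preSch h) ζ := by
    unfold denA
    rw [wZ_sub hconj (((differentiableAt_const _).fun_mul hqdiff).fun_mul hPR), wZ_conj,
      wZ_mul ((differentiableAt_const _).fun_mul hqdiff) hPR,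
      wZ_mul (differentiableAt_const _) hqdiff, wZ_const, wZ_of_holo hP, hwq, q_eq ζ]
    ring
  have hwbD : wZb (denA h) ζ = 1 + (1/2) * ζ * preSch h ζ := by
    unfold denA
    rw [wZb_sub hconj (((differentiableAt_const _).fun_mul hqdiff).fun_mul hPR), wZb_conj,
      wZb_mul ((differentiableAt_const _).fun_mul hqdiff) hPR,
      wZb_mul (differentiableAt_const _) hqdiff, wZb_const, wZb_of_holo hP, hwbq]
    ring
  -- Wirtinger derivatives of N = q * h'
  have hwN : wZ (fun w : ℂ => ((1 - ‖w‖^2:ℝ):ℂ) * deriv h w) ζ =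
      -((starRingEnd ℂ) ζ) * deriv h ζ
        + (1 - ζ * (starRingEnd ℂ) ζ) * (preSch h ζ * deriv h ζ) := by
    rw [wZ_mul hqdiff hd1R, wZ_of_holo hd1, hwq, hddP, q_eq ζ]
  have hwbN : wZb (fun w : ℂ => ((1 - ‖w‖^2:ℝ):ℂ) * deriv h w) ζ = -ζ * deriv h ζ := by
    rw [wZb_mul hqdiff hd1R, wZb_of_holo hd1, hwbq]
    ring
  -- value of D and φ as product
  have hDval : denA h ζ =
      (starRingEnd ℂ) ζ - (1/2) * (1 - ζ * (starRingEnd ℂ) ζ) * preSch h ζ := by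
    unfold denA; rw [q_eq ζ]
  have hD0 : (starRingEnd ℂ) ζ - (1/2) * (1 - ζ * (starRingEnd ℂ) ζ) * preSch h ζ ≠ 0 :=
    hDval ▸ hden
  have hphi : phiA h = fun w => (((1 - ‖w‖^2:ℝ):ℂ) * deriv h w) * (denA h w)⁻¹ := by
    funext w
    unfold phiA
    rw [div_eq_mul_inv]
  have hIdiff : DifferentiableAt ℝ (fun w => (denA h w)⁻¹) ζ := hDdiff.inv hden
  have hwbPhi : wZb (phiA h) ζ =
      (-ζ * deriv h ζ) * (denA h ζ)⁻¹
        + (((1 - ‖ζ‖^2:ℝ):ℂ) * deriv h ζ) * (-(1 + (1/2) * ζ * preSch h ζ) / (denA h ζ)^2) := by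
    rw [hphi, wZb_mul hNdiff hIdiff, wZb_inv hDdiff hden, hwbN, hwbD]
  have hwPhi : wZ (phiA h) ζ =
      (-((starRingEnd ℂ) ζ) * deriv h ζ
          + (1 - ζ * (starRingEnd ℂ) ζ) * (preSch h ζ * deriv h ζ)) * (denA h ζ)⁻¹
        + (((1 - ‖ζ‖^2:ℝ):ℂ) * deriv h ζ) *
          (-((1/2) * (starRingEnd ℂ) ζ * preSch h ζ
              - (1/2) * (1 - ζ * (starRingEnd ℂ) ζ) * deriv (preSch h) ζ) / (denA h ζ)^2) := by
    rw [hphi, wZ_mul hNdiff hIdiff, wZ_inv hDdiff hden, hwN, hwD]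
  constructor
  · rw [hwbPhi, q_eq ζ]
    field_simp [hden]
    rw [hDval]
    ring
  · rw [hwPhi, q_eq ζ]
    unfold schw
    field_simp [hden, hd0]
    rw [hDval]
    ring
end
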